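/- For all w, w' ∈ H: ρ·‖h(w) − h(w')‖₂ ≤ (1/2)·‖w − w'‖_H. -/

import Mathlib

/-!
With `A := K + ρ²I` (positive definite, hence invertible) and
`x := h(w) - h(w') = A⁻¹ κ(w - w')`, put `s := ∑ xᵢ vᵢ`. Then
`‖s‖² + ρ² ‖x‖₂² = xᵀ A x = xᵀ κ(w - w') = ⟪s, w - w'⟫ ≤ ‖s‖ ‖w - w'‖`,
so `ρ² ‖x‖₂² ≤ ‖s‖ ‖w - w'‖ - ‖s‖² ≤ ‖w - w'‖² / 4`.
-/

open Matrix Real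
open scoped BigOperators

noncomputable section

namespace KRR

/-- Euclidean 2-norm on `Fin t → ℝ`. -/
def twoNorm {t : ℕ} (v : Fin t → ℝ) : ℝ := Real.sqrt (∑ i, v i ^ 2)

/-- Gram matrix `K = [⟪vᵢ, vⱼ⟫]` of a finite family in a Hilbert space. -/
def gramOf {H : Type*} [NormedAddCommGroup H] [InnerProductSpace ℝ H]
    {t : ℕ} (v : Fin t → H) : Matrix (Fin t) (Fin t) ℝ :=
  Matrix.of fun i j => (inner ℝ (v i) (v j) : ℝ)

/-- `κ(w) = (⟪v₁,w⟫,…,⟪v_t,w⟫)`. -/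
def kappa {H : Type*} [NormedAddCommGroup H] [InnerProductSpace ℝ H]
    {t : ℕ} (v : Fin t → H) (w : H) : Fin t → ℝ :=
  fun i => (inner ℝ (v i) w : ℝ)

/-- `h(w) = (K + ρ²I)⁻¹ κ(w)`. -/
def hOf {H : Type*} [NormedAddCommGroup H] [InnerProductSpace ℝ H]
    {t : ℕ} (v : Fin t → H) (ρ : ℝ) (w : H) : Fin t → ℝ :=
  (gramOf v + ρ ^ 2 • (1 : Matrix (Fin t) (Fin t) ℝ))⁻¹ *ᵥ kappa v w

lemma twoNorm_eq_sqrt_dotProduct {t : ℕ} (x : Fin t → ℝ) : twoNorm x = √(x ⬝ᵥ x) := by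
  simp only [twoNorm, dotProduct, sq]

open scoped InnerProductSpace

section

variable {H : Type*} [NormedAddCommGroup H] [InnerProductSpace ℝ H] {t : ℕ} (v : Fin t → H)

lemma gramOf_eq_gram : gramOf v = gram ℝ v := rfl

lemma kappa_sub (w w' : H) : kappa v (w - w') = kappa v w - kappa v w' := by
  funext i
  simp only [kappa, inner_sub_right, Pi.sub_apply]

lemma hOf_sub (ρ : ℝ) (w w' : H) : hOf v ρ (w - w') = hOf v ρ w - hOf v ρ w' := by
  simp only [hOf, kappa_sub, mulVec_sub]

lemma dotProduct_kappa (x : Fin t → ℝ) (u : H) :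
    x ⬝ᵥ kappa v u = ⟪∑ i, x i • v i, u⟫_ℝ := by
  simp only [dotProduct, kappa, sum_inner, real_inner_smul_left]

lemma dotProduct_gramOf_mulVec (x : Fin t → ℝ) :
    x ⬝ᵥ (gramOf v *ᵥ x) = ‖∑ i, x i • v i‖ ^ 2 := by
  rw [gramOf_eq_gram, ← real_inner_self_eq_norm_sq, ← star_dotProduct_gram_mulVec, star_trivial]

lemma posDef_gramOf_add_smul_one {ρ : ℝ} (hρ : ρ ≠ 0) :
    (gramOf v + ρ ^ 2 • (1 : Matrix (Fin t) (Fin t) ℝ)).PosDef :=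
  gramOf_eq_gram v ▸
    PosDef.posSemidef_add (posSemidef_gram ℝ v) (PosDef.one.smul (pow_two_pos_of_ne_zero hρ))

lemma mulVec_hOf {ρ : ℝ} (hρ : ρ ≠ 0) (u : H) :
    (gramOf v + ρ ^ 2 • (1 : Matrix (Fin t) (Fin t) ℝ)) *ᵥ hOf v ρ u = kappa v u := by
  have hdet := (isUnit_iff_isUnit_det _).mp (posDef_gramOf_add_smul_one v hρ).isUnit
  rw [hOf, mulVec_mulVec, mul_nonsing_inv _ hdet, one_mulVec]

lemma sq_mul_dotProduct_le_of_mulVec_eq {ρ : ℝ} {x : Fin t → ℝ} {u : H}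
    (hx : (gramOf v + ρ ^ 2 • (1 : Matrix (Fin t) (Fin t) ℝ)) *ᵥ x = kappa v u) :
    ρ ^ 2 * (x ⬝ᵥ x) ≤ (1 / 2 * ‖u‖) ^ 2 := by
  set s := ∑ i, x i • v i
  have henergy : ‖s‖ ^ 2 + ρ ^ 2 * (x ⬝ᵥ x) = ⟪s, u⟫_ℝ := by
    rw [← dotProduct_kappa, ← hx, add_mulVec, dotProduct_add, dotProduct_gramOf_mulVec,
      smul_mulVec, one_mulVec, dotProduct_smul, smul_eq_mul]
  nlinarith [real_inner_le_norm s u, sq_nonneg (‖s‖ - 1 / 2 * ‖u‖)]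

end

theorem stmt13_general
    {H : Type*} [NormedAddCommGroup H] [InnerProductSpace ℝ H]
    {t : ℕ} (v : Fin t → H) (ρ : ℝ) (hρ : 0 < ρ) :
    ∀ w w' : H,
      ρ * twoNorm (fun i => hOf v ρ w i - hOf v ρ w' i) ≤ (1 / 2) * ‖w - w'‖ := by
  intro w w'
  set x := hOf v ρ (w - w')
  have hbound : ρ ^ 2 * (x ⬝ᵥ x) ≤ (1 / 2 * ‖w - w'‖) ^ 2 :=
    sq_mul_dotProduct_le_of_mulVec_eq v (mulVec_hOf v hρ.ne' (w - w'))
  calc ρ * twoNorm (fun i => hOf v ρ w i - hOf v ρ w' i)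
      = √(ρ ^ 2 * (x ⬝ᵥ x)) := by
        change ρ * twoNorm (hOf v ρ w - hOf v ρ w') = _
        rw [← hOf_sub, twoNorm_eq_sqrt_dotProduct, sqrt_mul (sq_nonneg ρ), sqrt_sq hρ.le]
    _ ≤ 1 / 2 * ‖w - w'‖ := sqrt_le_iff.mpr ⟨by positivity, hbound⟩

/-- `ρ‖h(w) − h(w')‖₂ ≤ (1/2)‖w − w'‖`. -/
theorem stmt13
    {H : Type*} [NormedAddCommGroup H] [InnerProductSpace ℝ H] [CompleteSpace H]
    {t : ℕ} (ht : 1 ≤ t) (v : Fin t → H) (ρ : ℝ) (hρ : 0 < ρ) :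
    ∀ w w' : H,
      ρ * twoNorm (fun i => hOf v ρ w i - hOf v ρ w' i) ≤ (1 / 2) * ‖w - w'‖ :=
  stmt13_general v ρ hρ

end KRR
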